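/- arXiv:2208.00038 — 2 statements merged into one kernel-verified Lean document; each statement's English description precedes it below -/
import Mathlib

section
/- Let X = (X, ρ) be a nonempty binary structure, I an infinite set with |I| less than the first measurable cardinal, and U a non-principal ultrafilter on I. Then the ultrapower ∏_U X is connected if and only if X has finite diameter. The implication from finite diameter to connectedness of the ultrapower holds in ZFC. -/
/-- Reflexivization of a binary relation. -/
def rRefl {X : Type*} (ρ : X → X → Prop) : X → X → Prop := fun a b => ρ a b ∨ a = b

/-- Signed step: `ρ` for `false`, `ρ⁻¹` for `true` (after reflexivizing). -/
def rStep {X : Type*} (ρ : X → X → Prop) : Bool → X → X → Prop :=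
  fun e a b => if e then rRefl ρ b a else rRefl ρ a b

/-- `(z, ε)` is a path of length `n+1` from `x` to `y`. -/
def pathPts {X : Type*} {n : ℕ} (x y : X) (z : Fin n → X) : Fin (n + 2) → X :=
  Fin.cons x (Fin.snoc z y)

def IsPath {X : Type*} (ρ : X → X → Prop) {n : ℕ} (z : Fin n → X)
    (ε : Fin (n + 1) → Bool) (x y : X) : Prop :=
  ∀ k : Fin (n + 1), rStep ρ (ε k) (pathPts x y z k.castSucc) (pathPts x y z k.succ)

/-- There is a path of length `≤ n+1` from `x` to `y`. -/
def dLE {X : Type*} (ρ : X → X → Prop) (n : ℕ) (x y : X) : Prop :=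
  ∃ m, m ≤ n ∧ ∃ z : Fin m → X, ∃ ε : Fin (m + 1) → Bool, IsPath ρ z ε x y

/-- A binary structure is connected iff any two points are joined by a finite path. -/
def Conn {X : Type*} (ρ : X → X → Prop) : Prop := ∀ x y : X, ∃ n, dLE ρ n x y

/-- The setoid of a reduced product: agreement on a set in the filter. -/
def redSetoid {I : Type*} (Φ : Filter I) (X : I → Type*) : Setoid (∀ i, X i) where
  r x y := {i | x i = y i} ∈ Φ
  iseqv := by
    refine ⟨fun x => ?_, fun h => ?_, fun h1 h2 => ?_⟩
    · simpa using Filter.univ_mem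
    · filter_upwards [h] with i e using e.symm
    · filter_upwards [h1, h2] with i e1 e2 using e1.trans e2

/-- The relation of the reduced product. -/
def redRel {I : Type*} (Φ : Filter I) {X : I → Type*} (ρ : ∀ i, X i → X i → Prop) :
    Quotient (redSetoid Φ X) → Quotient (redSetoid Φ X) → Prop :=
  Quotient.lift₂ (fun x y => {i | ρ i (x i) (y i)} ∈ Φ)
    (by
      intro a b a' b' ha hb
      have ha' : {i | a i = a' i} ∈ Φ := ha
      have hb' : {i | b i = b' i} ∈ Φ := hb
      apply propext
      constructor
      · intro h
        filter_upwards [h, ha', hb'] with i h1 h2 h3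
        rw [← h2, ← h3]; exact h1
      · intro h
        filter_upwards [h, ha', hb'] with i h1 h2 h3
        rw [h2, h3]; exact h1)

/-- The coordinatewise relation of the direct product. -/
def dirRel {I : Type*} {X : I → Type*} (ρ : ∀ i, X i → X i → Prop) :
    (∀ i, X i) → (∀ i, X i) → Prop := fun x y => ∀ i, ρ i (x i) (y i)

/-- A non-principal ultrafilter contains no singleton. -/
def NonPrincipal {I : Type*} (U : Ultrafilter I) : Prop := ∀ a : I, {a} ∉ U

/-- An `ω`-complete (countably complete) ultrafilter. -/
def OmegaComplete {I : Type*} (U : Ultrafilter I) : Prop :=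
  ∀ f : ℕ → Set I, (∀ n, f n ∈ U) → (⋂ n, f n) ∈ U

/-- `|I|` is less than the first measurable cardinal: no subset of `I` carries a
non-principal `ω`-complete ultrafilter. -/
def NoMeasurableLE (I : Type*) : Prop :=
  ∀ J : Set I, ∀ U : Ultrafilter J, ¬ (NonPrincipal U ∧ OmegaComplete U)

/-- The linear graph on `ω`. -/
def linRel : ℕ → ℕ → Prop := fun m n => Nat.dist m n = 1

/-! A path of fixed length `n` between two points of a structure is described by finitely many
atomic statements, so by Łoś it exists in an ultraproduct iff it exists in almost every factor.
Hence a uniform bound on the diameters of the factors makes the ultraproduct connected.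
Conversely, if `|I|` is below the first measurable cardinal, a non-principal ultrafilter `U` is not
countably complete, which yields `f : I → ℕ` tending to infinity along `U`. If `X` had infinite
diameter, pick `a n, b n` not joined by a path of length `≤ n + 1`; such a path between
`[a ∘ f]` and `[b ∘ f]` would descend to a coordinate `i` with `f i ≥ n`, a contradiction. -/

open Filter

section Paths

variable {X : Type*} {ρ : X → X → Prop}

lemma pathPts_comp {Y : Type*} (f : X → Y) {n : ℕ} (x y : X) (z : Fin n → X) :
    pathPts (f x) (f y) (f ∘ z) = f ∘ pathPts x y z := by
  simp [pathPts, Fin.comp_cons, Fin.comp_snoc]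

lemma pathPts_apply {I : Type*} {X : I → Type*} {n : ℕ} (x y : ∀ i, X i) (z : Fin n → ∀ i, X i)
    (k : Fin (n + 2)) (i : I) :
    pathPts x y z k i = pathPts (x i) (y i) (fun j => z j i) k :=
  (congrFun (pathPts_comp (fun g : ∀ i, X i => g i) x y z) k).symm

lemma pathPts_last {n : ℕ} (x y : X) (z : Fin n → X) : pathPts x y z (Fin.last (n + 1)) = y := by
  rw [pathPts, ← Fin.succ_last, Fin.cons_succ, Fin.snoc_last]

lemma pathPts_snoc_castSucc {n : ℕ} (x y : X) (z : Fin n → X) (k : Fin (n + 2)) :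
    pathPts x y (Fin.snoc z y) k.castSucc = pathPts x y z k := by
  induction k using Fin.cases with
  | zero => simp [pathPts]
  | succ l =>
    rw [← Fin.succ_castSucc]
    simp [pathPts]

lemma IsPath.snoc_refl {n : ℕ} {z : Fin n → X} {ε : Fin (n + 1) → Bool} {x y : X}
    (h : IsPath ρ z ε x y) : IsPath ρ (Fin.snoc z y) (Fin.snoc ε false) x y := by
  intro k
  induction k using Fin.lastCases with
  | last =>
    rw [Fin.snoc_last, Fin.succ_last, pathPts_snoc_castSucc, pathPts_last, pathPts_last]
    exact Or.inr rfl
  | cast j =>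
    rw [Fin.snoc_castSucc, Fin.succ_castSucc, pathPts_snoc_castSucc, pathPts_snoc_castSucc]
    exact h j

lemma dLE_iff_exists_isPath {n : ℕ} {x y : X} :
    dLE ρ n x y ↔ ∃ (z : Fin n → X) (ε : Fin (n + 1) → Bool), IsPath ρ z ε x y := by
  refine ⟨?_, fun hpath => ⟨n, le_rfl, hpath⟩⟩
  rintro ⟨m, hmn, hpath⟩
  induction n, hmn using Nat.le_induction with
  | base => exact hpath
  | succ n _ ih =>
    obtain ⟨z, ε, hp⟩ := ih
    exact ⟨_, _, hp.snoc_refl⟩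

lemma dLE.mono {m n : ℕ} {x y : X} (hmn : m ≤ n) (h : dLE ρ m x y) : dLE ρ n x y :=
  let ⟨k, hkm, hpath⟩ := h
  ⟨k, hkm.trans hmn, hpath⟩

end Paths

section Ultraproduct

variable {I : Type*} {X : I → Type*} (U : Ultrafilter I) (ρ : ∀ i, X i → X i → Prop)

lemma rStep_redRel_mk_iff (e : Bool) (x y : ∀ i, X i) :
    rStep (redRel (U : Filter I) ρ) e (Quotient.mk _ x) (Quotient.mk _ y) ↔
      ∀ᶠ i in (U : Filter I), rStep (ρ i) e (x i) (y i) := by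
  have hRefl : ∀ a b : ∀ i, X i,
      rRefl (redRel (U : Filter I) ρ) (Quotient.mk _ a) (Quotient.mk _ b) ↔
        ∀ᶠ i in (U : Filter I), rRefl (ρ i) (a i) (b i) := fun a b => by
    unfold rRefl
    rw [Ultrafilter.eventually_or, Quotient.eq]
    rfl
  cases e <;> exact hRefl _ _

lemma exists_isPath_redRel_mk_iff {n : ℕ} (x y : ∀ i, X i) :
    (∃ (z : Fin n → Quotient (redSetoid (U : Filter I) X)) (ε : Fin (n + 1) → Bool),
        IsPath (redRel (U : Filter I) ρ) z ε (Quotient.mk _ x) (Quotient.mk _ y)) ↔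
      ∀ᶠ i in (U : Filter I), ∃ (z : Fin n → X i) (ε : Fin (n + 1) → Bool),
        IsPath (ρ i) z ε (x i) (y i) := by
  constructor
  · rintro ⟨z, ε, hpath⟩
    set w : Fin n → ∀ i, X i := fun j => (z j).out
    have hz : z = Quotient.mk _ ∘ w := funext fun j => (Quotient.out_eq (z j)).symm
    have hsteps : ∀ k, ∀ᶠ i in (U : Filter I),
        rStep (ρ i) (ε k) (pathPts x y w k.castSucc i) (pathPts x y w k.succ i) := by
      intro k
      have hk := hpath k
      rw [hz, pathPts_comp] at hk
      exact (rStep_redRel_mk_iff U ρ _ _ _).mp hk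
    filter_upwards [eventually_all.mpr hsteps] with i hi
    refine ⟨fun j => w j i, ε, fun k => ?_⟩
    simpa only [pathPts_apply] using hi k
  · intro h
    -- only finitely many step directions `ε`, so one of them occurs almost everywhere
    obtain ⟨ε, hε⟩ := Ultrafilter.eventually_exists_iff.mp
      (h.mono fun _ hi => exists_comm.mp hi)
    have hchoice : ∀ i, ∃ z : Fin n → X i,
        (∃ z', IsPath (ρ i) z' ε (x i) (y i)) → IsPath (ρ i) z ε (x i) (y i) := by
      intro i
      by_cases hi : ∃ z', IsPath (ρ i) z' ε (x i) (y i)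
      · exact hi.imp fun z hz _ => hz
      · exact ⟨fun _ => x i, fun h' => absurd h' hi⟩
    choose zf hzf using hchoice
    set w : Fin n → ∀ i, X i := fun j i => zf i j
    refine ⟨Quotient.mk _ ∘ w, ε, fun k => ?_⟩
    rw [pathPts_comp, Function.comp_apply, Function.comp_apply, rStep_redRel_mk_iff]
    filter_upwards [hε] with i hi
    simpa only [pathPts_apply] using hzf i hi k

lemma dLE_redRel_mk_iff {n : ℕ} (x y : ∀ i, X i) :
    dLE (redRel (U : Filter I) ρ) n (Quotient.mk _ x) (Quotient.mk _ y) ↔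
      ∀ᶠ i in (U : Filter I), dLE (ρ i) n (x i) (y i) := by
  simp only [dLE_iff_exists_isPath]
  exact exists_isPath_redRel_mk_iff U ρ x y

theorem conn_redRel_of_forall_dLE (h : ∃ n, ∀ i (a b : X i), dLE (ρ i) n a b) :
    Conn (redRel (U : Filter I) ρ) := by
  obtain ⟨n, hn⟩ := h
  intro p q
  induction p using Quotient.inductionOn with | _ x => ?_
  induction q using Quotient.inductionOn with | _ y => ?_
  exact ⟨n, (dLE_redRel_mk_iff U ρ x y).mpr (Eventually.of_forall fun i => hn i _ _)⟩

end Ultraproduct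

theorem exists_forall_dLE_of_conn_redRel {I X : Type*} {U : Ultrafilter I} {ρ : X → X → Prop}
    {f : I → ℕ} (hf : Tendsto f (U : Filter I) atTop)
    (hconn : Conn (redRel (U : Filter I) fun _ : I => ρ)) :
    ∃ n, ∀ a b : X, dLE ρ n a b := by
  by_contra! hfar
  choose a b hab using hfar
  obtain ⟨n, hn⟩ := hconn (Quotient.mk _ (a ∘ f)) (Quotient.mk _ (b ∘ f))
  rw [dLE_redRel_mk_iff] at hn
  obtain ⟨i, hi, hni⟩ := (hn.and (hf.eventually_ge_atTop n)).exists
  exact hab (f i) (hi.mono hni)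

section CountableCompleteness

variable {I J : Type*} {U : Ultrafilter I}

lemma NonPrincipal.map (hU : NonPrincipal U) {e : I → J} (he : e.Injective) :
    NonPrincipal (U.map e) := by
  intro b hb
  rw [Ultrafilter.mem_map] at hb
  rcases (Set.subsingleton_singleton.preimage he).eq_empty_or_singleton with h | ⟨a, ha⟩
  · exact U.empty_notMem (h ▸ hb)
  · exact hU a (ha ▸ hb)

lemma OmegaComplete.map (hU : OmegaComplete U) (e : I → J) : OmegaComplete (U.map e) := by
  intro s hs
  rw [Ultrafilter.mem_map, Set.preimage_iInter]
  exact hU _ hs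

lemma NoMeasurableLE.not_omegaComplete (h : NoMeasurableLE I) (hU : NonPrincipal U) :
    ¬ OmegaComplete U := fun hω =>
  h Set.univ (U.map (Equiv.Set.univ I).symm) ⟨hU.map (Equiv.injective _), hω.map _⟩

/-- The witness is the first index `n` with `i ∉ A n`, for a sequence `A` in `U` whose
intersection is not in `U`. -/
lemma exists_tendsto_atTop_of_not_omegaComplete (h : ¬ OmegaComplete U) :
    ∃ f : I → ℕ, Tendsto f (U : Filter I) atTop := by
  simp only [OmegaComplete, not_forall] at h
  obtain ⟨A, hA, hnot⟩ := h
  classical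
  refine ⟨fun i => if h : ∃ n, i ∉ A n then Nat.find h else 0, tendsto_atTop.mpr fun n => ?_⟩
  have hout : ∀ᶠ i in (U : Filter I), ∃ m, i ∉ A m := by
    filter_upwards [Ultrafilter.compl_mem_iff_notMem.mpr hnot] with i hi
    simpa using hi
  filter_upwards [hout, eventually_all.mpr fun k : Fin n => hA k] with i hi hAi
  rw [dif_pos hi, Nat.le_find_iff]
  exact fun m hm hmA => hmA (hAi ⟨m, hm⟩)

end CountableCompleteness

theorem stmt_9_general {X : Type*} (ρ : X → X → Prop) {I : Type*}
    (U : Ultrafilter I) (hU : NonPrincipal U) :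
    (NoMeasurableLE I →
      (Conn (redRel (U : Filter I) (fun _ : I => ρ)) ↔ ∃ n, ∀ a b : X, dLE ρ n a b)) ∧
    ((∃ n, ∀ a b : X, dLE ρ n a b) → Conn (redRel (U : Filter I) (fun _ : I => ρ))) := by
  have hconn : (∃ n, ∀ a b : X, dLE ρ n a b) → Conn (redRel (U : Filter I) fun _ : I => ρ) :=
    fun h => conn_redRel_of_forall_dLE U _ (h.imp fun _ hn _ => hn)
  refine ⟨fun hNM => ⟨fun hC => ?_, hconn⟩, hconn⟩
  obtain ⟨f, hf⟩ := exists_tendsto_atTop_of_not_omegaComplete (hNM.not_omegaComplete hU)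
  exact exists_forall_dLE_of_conn_redRel hf hC

theorem stmt_9 {X : Type*} [Nonempty X] (ρ : X → X → Prop) {I : Type*} [Infinite I]
    (U : Ultrafilter I) (hU : NonPrincipal U) :
    (NoMeasurableLE I →
      (Conn (redRel (U : Filter I) (fun _ : I => ρ)) ↔ ∃ n, ∀ a b : X, dLE ρ n a b)) ∧
    ((∃ n, ∀ a b : X, dLE ρ n a b) → Conn (redRel (U : Filter I) (fun _ : I => ρ))) :=
  stmt_9_general ρ U hU
end

section
/- Let U be a non-principal ω-complete ultrafilter on a set I and X_i = (X_i, ρ_i) binary structures with {i : X_i is connected} ∈ U. Then for any x, y ∈ ∏ X_i there exist n ∈ ω, a sign pattern ε ∈ 2^{n+1}, and a set A ∈ U such that for every i ∈ A there is a path (z̄, ε) of length n+1 from x_i to y_i in X_i with this same pattern ε; consequently [x]_U and [y]_U are connected by a path in ∏_U X_i. -/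
/-!
Connectedness gives, for U-many `i`, a path from `x i` to `y i`; padding with reflexive steps
turns a bound on the length into an exact length, and these lengths range over `ℕ`.
By ω-completeness one length `n` occurs on a set in `U`, and since there are only finitely many
sign patterns of length `n + 1`, one pattern `ε` occurs on a smaller set in `U`. Because `U` is
an ultrafilter, a step `ρ^{ε_k}` of the reflexivization holding U-often holds in the ultraproduct,
so the coordinatewise paths glue to a path between `[x]_U` and `[y]_U`.
-/

section Paths

variable {X : Type*} {ρ : X → X → Prop}

lemma pathPts_cons_self {n : ℕ} (x y : X) (z : Fin n → X) :
    pathPts x y (Fin.cons x z) = Fin.cons x (pathPts x y z) := by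
  simp only [pathPts, ← Fin.cons_snoc_eq_snoc_cons]

lemma pathPts_map {Y : Type*} (f : X → Y) {n : ℕ} (x y : X) (z : Fin n → X) (j : Fin (n + 2)) :
    pathPts (f x) (f y) (f ∘ z) j = f (pathPts x y z j) := by
  simp only [pathPts, ← Fin.comp_snoc, ← Fin.comp_cons, Function.comp_apply]

lemma IsPath.cons_self {n : ℕ} {z : Fin n → X} {ε : Fin (n + 1) → Bool} {x y : X}
    (h : IsPath ρ z ε x y) : IsPath ρ (Fin.cons x z) (Fin.cons false ε) x y := by
  intro k
  rw [pathPts_cons_self]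
  induction k using Fin.cases with
  | zero => exact Or.inr rfl
  | succ j =>
    rw [Fin.cons_succ, ← Fin.succ_castSucc, Fin.cons_succ, Fin.cons_succ]
    exact h j

lemma dLE.exists_isPath {n : ℕ} {x y : X} (h : dLE ρ n x y) :
    ∃ ε : Fin (n + 1) → Bool, ∃ z : Fin n → X, IsPath ρ z ε x y := by
  obtain ⟨m, hm, z, ε, hp⟩ := h
  induction n, hm using Nat.le_induction with
  | base => exact ⟨ε, z, hp⟩
  | succ n _ ih =>
    obtain ⟨ε', z', hp'⟩ := ih
    exact ⟨_, _, hp'.cons_self⟩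

lemma Conn.exists_isPath (h : Conn ρ) (x y : X) :
    ∃ n, ∃ ε : Fin (n + 1) → Bool, ∃ z : Fin n → X, IsPath ρ z ε x y :=
  let ⟨n, hn⟩ := h x y
  ⟨n, hn.exists_isPath⟩

end Paths

lemma OmegaComplete.exists_eventually_of_eventually_exists {I : Type*} {U : Ultrafilter I}
    (hω : OmegaComplete U) {P : ℕ → I → Prop} (h : ∀ᶠ i in U, ∃ n, P n i) :
    ∃ n, ∀ᶠ i in U, P n i := by
  by_contra! hP
  have hnone : (⋂ n, {i | ¬P n i}) ∈ U := hω _ hP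
  obtain ⟨i, hi, n, hn⟩ := Filter.nonempty_of_mem (Filter.inter_mem hnone h)
  exact Set.mem_iInter.1 hi n hn

section Ultraproduct

variable {I : Type*} (U : Ultrafilter I) {X : I → Type*} {ρ : ∀ i, X i → X i → Prop}

local notation "mk" => Quotient.mk (redSetoid (U : Filter I) X)

lemma rRefl_redRel_mk {a b : ∀ i, X i} (h : ∀ᶠ i in U, rRefl (ρ i) (a i) (b i)) :
    rRefl (redRel (U : Filter I) ρ) (mk a) (mk b) :=
  (Ultrafilter.eventually_or.1 h).imp id Quotient.sound

lemma rStep_redRel_mk {e : Bool} {a b : ∀ i, X i}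
    (h : ∀ᶠ i in U, rStep (ρ i) e (a i) (b i)) :
    rStep (redRel (U : Filter I) ρ) e (mk a) (mk b) := by
  cases e <;> exact rRefl_redRel_mk U h

lemma exists_isPath_redRel_mk {n : ℕ} {ε : Fin (n + 1) → Bool} {x y : ∀ i, X i}
    (h : ∀ᶠ i in U, ∃ z : Fin n → X i, IsPath (ρ i) z ε (x i) (y i)) :
    ∃ Z : Fin n → Quotient (redSetoid (U : Filter I) X),
      IsPath (redRel (U : Filter I) ρ) Z ε (mk x) (mk y) := by
  have (i : I) : Nonempty (Fin n → X i) := ⟨fun _ => x i⟩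
  choose! w hw using fun i (hi : ∃ z : Fin n → X i, IsPath (ρ i) z ε (x i) (y i)) => hi
  let g : Fin n → ∀ i, X i := fun k i => w i k
  have hcoord (i : I) (j : Fin (n + 2)) :
      pathPts x y g j i = pathPts (x i) (y i) (fun k => g k i) j :=
    (pathPts_map (Function.eval i) x y g j).symm
  refine ⟨mk ∘ g, fun k => ?_⟩
  rw [pathPts_map, pathPts_map]
  refine rStep_redRel_mk U (h.mono fun i hi => ?_)
  rw [hcoord, hcoord]
  exact hw i hi k

end Ultraproduct

theorem stmt_11_general {I : Type*} (U : Ultrafilter I)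
    (hω : OmegaComplete U) {X : I → Type*} (ρ : ∀ i, X i → X i → Prop)
    (hc : {i | Conn (ρ i)} ∈ U) (x y : ∀ i, X i) :
    ∃ (n : ℕ) (ε : Fin (n + 1) → Bool) (A : Set I), A ∈ U ∧
      (∀ i ∈ A, ∃ z : Fin n → X i, IsPath (ρ i) z ε (x i) (y i)) ∧
      ∃ Z : Fin n → Quotient (redSetoid (U : Filter I) X),
        IsPath (redRel (U : Filter I) ρ) Z ε
          (Quotient.mk (redSetoid (U : Filter I) X) x)
          (Quotient.mk (redSetoid (U : Filter I) X) y) := by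
  have hpath : ∀ᶠ i in U, ∃ n, ∃ ε : Fin (n + 1) → Bool, ∃ z : Fin n → X i,
      IsPath (ρ i) z ε (x i) (y i) :=
    Filter.mem_of_superset hc fun i hi => Conn.exists_isPath hi (x i) (y i)
  obtain ⟨n, hn⟩ := hω.exists_eventually_of_eventually_exists hpath
  obtain ⟨ε, hε⟩ := Ultrafilter.eventually_exists_iff.1 hn
  exact ⟨n, ε, _, hε, fun _ hi => hi, exists_isPath_redRel_mk U hε⟩

theorem stmt_11 {I : Type*} (U : Ultrafilter I) (hU : NonPrincipal U)
    (hω : OmegaComplete U) {X : I → Type*} (ρ : ∀ i, X i → X i → Prop)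
    (hc : {i | Conn (ρ i)} ∈ U) (x y : ∀ i, X i) :
    ∃ (n : ℕ) (ε : Fin (n + 1) → Bool) (A : Set I), A ∈ U ∧
      (∀ i ∈ A, ∃ z : Fin n → X i, IsPath (ρ i) z ε (x i) (y i)) ∧
      ∃ Z : Fin n → Quotient (redSetoid (U : Filter I) X),
        IsPath (redRel (U : Filter I) ρ) Z ε
          (Quotient.mk (redSetoid (U : Filter I) X) x)
          (Quotient.mk (redSetoid (U : Filter I) X) y) :=
  stmt_11_general U hω ρ hc x y
end
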